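/- arXiv:1810.09820 — 7 statements merged into one kernel-verified Lean document; each statement's English description precedes it below -/
import Mathlib

section
/- Let A be an n×n real matrix with spectral radius ρ(A) (the largest absolute value of its complex eigenvalues), let P̄ and Σ_w be symmetric positive semidefinite n×n matrices, and define P(0) = P̄, P(τ+1) = A·P(τ)·Aᵀ + Σ_w. If r_s ∈ (0,1] and ρ(A)²·(1 − r_s) < 1, then for every τ ∈ ℕ and every λ ≥ 0 the series Σ_{t=0}^∞ (1 − r_s)^t · (Tr(P(τ+t)) + λ) converges (is finite). -/
/-!
Unrolling the recursion gives `P t = A^t P̄ (A^t)ᵀ + ∑_{j<t} A^j Σ_w (A^j)ᵀ`. By Gelfand's formula,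
`‖A^k‖ = O(s^k)` for every `s > max ρ(A) 1`, hence `‖P t‖ = O(s^(2t))`. Since
`ρ(A)² (1 - r_s) < 1` and `1 - r_s < 1`, some such `s` has `(1 - r_s) s² < 1`, and the discounted
series is dominated by a convergent geometric series.
-/

open Matrix Filter Asymptotics Finset Topology
open scoped Matrix.Norms.Frobenius

theorem spectrum.isBigO_pow_of_spectralRadius_lt {A : Type*} [NormedRing A] [NormedAlgebra ℂ A]
    [CompleteSpace A] (a : A) {s : ℝ} (hs : spectralRadius ℂ a < ENNReal.ofReal s) :
    (fun k : ℕ => a ^ k) =O[atTop] fun k => s ^ k := by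
  have hs0 : 0 < s := ENNReal.ofReal_pos.mp (pos_of_gt hs)
  refine IsBigO.of_bound 1 ?_
  filter_upwards [(pow_norm_pow_one_div_tendsto_nhds_spectralRadius a).eventually_lt_const hs,
    eventually_ne_atTop 0] with k hk hk0
  rw [ENNReal.ofReal_lt_ofReal_iff hs0, one_div] at hk
  calc ‖a ^ k‖ = (‖a ^ k‖ ^ (k⁻¹ : ℝ)) ^ k := (Real.rpow_inv_natCast_pow (norm_nonneg _) hk0).symm
    _ ≤ s ^ k := by gcongr
    _ = 1 * ‖s ^ k‖ := by rw [one_mul, norm_pow, Real.norm_of_nonneg hs0.le]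

section

variable {m : Type*} [Fintype m] [DecidableEq m]

theorem Matrix.exists_norm_pow_le_of_spectrum_le (A : Matrix m m ℝ) {ρ s : ℝ}
    (hρ : ∀ z ∈ spectrum ℂ (A.map (Complex.ofReal ·)), ‖z‖ ≤ ρ) (hs0 : 0 < s) (hρs : ρ < s) :
    ∃ K, ∀ k : ℕ, ‖A ^ k‖ ≤ K * s ^ k := by
  have hradius : spectralRadius ℂ (A.map (Complex.ofReal ·)) < ENNReal.ofReal s :=
    calc spectralRadius ℂ (A.map (Complex.ofReal ·)) ≤ ENNReal.ofReal ρ := iSup₂_le fun z hz => by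
          simpa [ofReal_norm, enorm] using ENNReal.ofReal_le_ofReal (hρ z hz)
      _ < ENNReal.ofReal s := (ENNReal.ofReal_lt_ofReal_iff hs0).mpr hρs
  have hmap : ∀ k : ℕ, (A.map (Complex.ofReal ·)) ^ k = (A ^ k).map (Complex.ofReal ·) := fun k =>
    (map_pow Complex.ofRealHom.mapMatrix A k).symm
  obtain ⟨K, hK⟩ := (isBigO_nat_atTop_iff fun k hk => absurd hk (pow_ne_zero k hs0.ne')).mp
    (spectrum.isBigO_pow_of_spectralRadius_lt _ hradius)
  refine ⟨K, fun k => ?_⟩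
  simpa [hmap, frobenius_norm_map_eq, abs_of_pos hs0] using hK k

theorem Matrix.lyapunov_iterate_eq {R : Type*} [CommRing R] (A P₀ Q : Matrix m m R)
    (P : ℕ → Matrix m m R) (h0 : P 0 = P₀) (hrec : ∀ t, P (t + 1) = A * P t * Aᵀ + Q) (t : ℕ) :
    P t = A ^ t * P₀ * (A ^ t)ᵀ + ∑ j ∈ range t, A ^ j * Q * (A ^ j)ᵀ := by
  have conj_succ : ∀ (X : Matrix m m R) (j : ℕ),
      A * (A ^ j * X * (A ^ j)ᵀ) * Aᵀ = A ^ (j + 1) * X * (A ^ (j + 1))ᵀ := by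
    intro X j
    rw [pow_succ', transpose_mul]
    simp only [Matrix.mul_assoc]
  induction t with
  | zero => simp [h0]
  | succ t ih =>
    rw [hrec, ih, Matrix.mul_add, Matrix.add_mul, Finset.mul_sum, Finset.sum_mul, sum_range_succ',
      pow_zero, transpose_one, Matrix.one_mul, Matrix.mul_one]
    simp only [conj_succ]
    abel

theorem Matrix.norm_mul_mul_transpose_le (M X : Matrix m m ℝ) :
    ‖M * X * Mᵀ‖ ≤ ‖M‖ ^ 2 * ‖X‖ :=
  calc ‖M * X * Mᵀ‖ ≤ ‖M‖ * ‖X‖ * ‖Mᵀ‖ := (norm_mul_le _ _).trans (by gcongr; exact norm_mul_le _ _)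
    _ = ‖M‖ ^ 2 * ‖X‖ := by rw [frobenius_norm_transpose]; ring

theorem Matrix.norm_lyapunov_iterate_le (A P₀ Q : Matrix m m ℝ) (P : ℕ → Matrix m m ℝ)
    (h0 : P 0 = P₀) (hrec : ∀ t, P (t + 1) = A * P t * Aᵀ + Q) {K r : ℝ} (hr : 1 < r)
    (hK : ∀ k, ‖A ^ k‖ ^ 2 ≤ K * r ^ k) (t : ℕ) :
    ‖P t‖ ≤ K * (‖P₀‖ + ‖Q‖ / (r - 1)) * r ^ t := by
  have hK0 : 0 ≤ K := by simpa using (sq_nonneg ‖A ^ 0‖).trans (hK 0)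
  have hterm : ∀ (X : Matrix m m ℝ) k, ‖A ^ k * X * (A ^ k)ᵀ‖ ≤ K * ‖X‖ * r ^ k := fun X k =>
    (norm_mul_mul_transpose_le _ X).trans <| by
      rw [mul_right_comm]; exact mul_le_mul_of_nonneg_right (hK k) (norm_nonneg X)
  have hgeom : ∑ j ∈ range t, r ^ j ≤ r ^ t / (r - 1) := by
    rw [geom_sum_eq hr.ne']
    gcongr; linarith
  rw [lyapunov_iterate_eq A P₀ Q P h0 hrec t]
  calc ‖A ^ t * P₀ * (A ^ t)ᵀ + ∑ j ∈ range t, A ^ j * Q * (A ^ j)ᵀ‖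
      ≤ K * ‖P₀‖ * r ^ t + ∑ j ∈ range t, K * ‖Q‖ * r ^ j :=
        (norm_add_le _ _).trans (add_le_add (hterm P₀ t) ((norm_sum_le _ _).trans
          (sum_le_sum fun j _ => hterm Q j)))
    _ ≤ K * ‖P₀‖ * r ^ t + K * ‖Q‖ * (r ^ t / (r - 1)) := by
        rw [← mul_sum]; gcongr
    _ = K * (‖P₀‖ + ‖Q‖ / (r - 1)) * r ^ t := by ring

end

theorem discounted_cost_summable_general
    {n : ℕ} (A Pbar Sw : Matrix (Fin n) (Fin n) ℝ)
    (P : ℕ → Matrix (Fin n) (Fin n) ℝ)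
    (hP0 : P 0 = Pbar)
    (hPrec : ∀ τ : ℕ, P (τ + 1) = A * P τ * Aᵀ + Sw)
    (rs ρA : ℝ) (hrs0 : 0 < rs) (hrs1 : rs ≤ 1)
    (hρ : ∀ z ∈ spectrum ℂ (A.map (Complex.ofReal ·)), ‖z‖ ≤ ρA)
    (hstab : ρA ^ 2 * (1 - rs) < 1) :
    ∀ τ : ℕ, ∀ lam : ℝ, 0 ≤ lam →
      Summable (fun t : ℕ => (1 - rs) ^ t * ((P (τ + t)).trace + lam)) := by
  intro τ lam _
  have hq0 : 0 ≤ 1 - rs := sub_nonneg.mpr hrs1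
  have hq1 : 1 - rs < 1 := by linarith
  have hq_max : (1 - rs) * max ρA 1 ^ 2 < 1 := by
    rcases max_cases ρA 1 with ⟨h, _⟩ | ⟨h, _⟩ <;> rw [h] <;> nlinarith
  obtain ⟨s, hqs, hs⟩ : ∃ s, (1 - rs) * s ^ 2 < 1 ∧ max ρA 1 < s :=
    ((((continuous_const.mul (continuous_pow 2)).tendsto _).eventually (gt_mem_nhds hq_max)
      |>.filter_mono nhdsWithin_le_nhds).and self_mem_nhdsWithin).exists (f := 𝓝[>] max ρA 1)
  have hs1 : 1 < s := (le_max_right _ _).trans_lt hs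
  obtain ⟨K, hK⟩ := A.exists_norm_pow_le_of_spectrum_le hρ (by linarith)
    ((le_max_left _ _).trans_lt hs)
  have hP := A.norm_lyapunov_iterate_le Pbar Sw P hP0 hPrec (K := K ^ 2)
    (one_lt_pow₀ hs1 two_ne_zero) fun k =>
      (pow_le_pow_left₀ (norm_nonneg _) (hK k) 2).trans_eq (by ring)
  set C := K ^ 2 * (‖Pbar‖ + ‖Sw‖ / (s ^ 2 - 1))
  have hPsum : Summable fun t => (1 - rs) ^ t • P (τ + t) := by
    refine .of_norm_bounded ((summable_geometric_of_lt_one (by positivity) hqs).mul_left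
      (C * (s ^ 2) ^ τ)) fun t => ?_
    rw [norm_smul, norm_pow, Real.norm_of_nonneg hq0]
    calc (1 - rs) ^ t * ‖P (τ + t)‖ ≤ (1 - rs) ^ t * (C * (s ^ 2) ^ (τ + t)) := by
          gcongr; exact hP _
      _ = C * (s ^ 2) ^ τ * ((1 - rs) * s ^ 2) ^ t := by rw [pow_add, mul_pow]; ring
  simpa [mul_add] using (hPsum.map (traceAddMonoidHom (Fin n) ℝ) continuous_id.matrix_trace).add
    ((summable_geometric_of_lt_one hq0 hq1).mul_right lam)

/-- Under the stability condition `ρ(A)² (1 − r_s) < 1` (where `ρA` bounds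
the absolute values of all complex eigenvalues of `A`), the geometrically discounted series
of one-stage costs `∑_{t} (1 − r_s)^t (Tr (P (τ+t)) + λ)` converges for every `τ` and every
`λ ≥ 0`. -/
theorem discounted_cost_summable
    {n : ℕ} (A Pbar Sw : Matrix (Fin n) (Fin n) ℝ)
    (hPbar : Pbar.PosSemidef) (hSw : Sw.PosSemidef)
    (P : ℕ → Matrix (Fin n) (Fin n) ℝ)
    (hP0 : P 0 = Pbar)
    (hPrec : ∀ τ : ℕ, P (τ + 1) = A * P τ * Aᵀ + Sw)
    (rs ρA : ℝ) (hrs0 : 0 < rs) (hrs1 : rs ≤ 1)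
    (hρ : ∀ z ∈ spectrum ℂ (A.map (Complex.ofReal ·)), ‖z‖ ≤ ρA)
    (hstab : ρA ^ 2 * (1 - rs) < 1) :
    ∀ τ : ℕ, ∀ lam : ℝ, 0 ≤ lam →
      Summable (fun t : ℕ => (1 - rs) ^ t * ((P (τ + t)).trace + lam)) :=
  discounted_cost_summable_general A Pbar Sw P hP0 hPrec rs ρA hrs0 hrs1 hρ hstab
end

section
/- Suppose Q : ℕ × {0,1} → ℝ and J ∈ ℝ solve the average-cost Bellman optimality equation of the scheduling MDP, i.e., writing V(τ) := min(Q(τ,0), Q(τ,1)), for all τ ∈ ℕ: Q(τ,0) = g(τ) + V(τ+1) − J and Q(τ,1) = g(τ) + λ + r_s·V(0) + (1 − r_s)·V(τ+1) − J. Then Q(τ,1) − Q(τ,0) = λ + r_s·(V(0) − V(τ+1)) for all τ, and if V is nondecreasing then Q is submodular: Q(τ,1) − Q(τ,0) ≤ Q(τ',1) − Q(τ',0) whenever τ ≥ τ'. (Submodularity of the Q-factor, Lemma 4.) -/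
theorem bellman_Q_sub_eq {rs lam J : ℝ} {g V : ℕ → ℝ} {Q : ℕ → Fin 2 → ℝ}
    (hQ0 : ∀ τ : ℕ, Q τ 0 = g τ + V (τ + 1) - J)
    (hQ1 : ∀ τ : ℕ, Q τ 1 = g τ + lam + rs * V 0 + (1 - rs) * V (τ + 1) - J) (τ : ℕ) :
    Q τ 1 - Q τ 0 = lam + rs * (V 0 - V (τ + 1)) := by
  rw [hQ0, hQ1]
  ring

theorem antitone_add_mul_sub_succ {rs lam : ℝ} {V : ℕ → ℝ} (hrs : 0 ≤ rs) (hV : Monotone V) :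
    Antitone fun τ : ℕ => lam + rs * (V 0 - V (τ + 1)) := fun _ _ h => by
  have := hV (Nat.succ_le_succ h)
  dsimp only
  gcongr

theorem Q_factor_submodular_general
    (rs lam J : ℝ) (hrs0 : 0 < rs)
    (g : ℕ → ℝ)
    (Q : ℕ → Fin 2 → ℝ) (V : ℕ → ℝ)
    (hQ0 : ∀ τ : ℕ, Q τ 0 = g τ + V (τ + 1) - J)
    (hQ1 : ∀ τ : ℕ, Q τ 1 = g τ + lam + rs * V 0 + (1 - rs) * V (τ + 1) - J) :
    (∀ τ : ℕ, Q τ 1 - Q τ 0 = lam + rs * (V 0 - V (τ + 1))) ∧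
      (Monotone V →
        ∀ τ τ' : ℕ, τ' ≤ τ → Q τ 1 - Q τ 0 ≤ Q τ' 1 - Q τ' 0) := by
  have hdiff := bellman_Q_sub_eq hQ0 hQ1
  refine ⟨hdiff, fun hV τ τ' h => ?_⟩
  rw [hdiff, hdiff]
  exact antitone_add_mul_sub_succ hrs0.le hV h

/-- **Submodularity of the Q-factor, Lemma 4.** If `(Q, J)` solves the
average-cost Bellman optimality equation of the scheduling MDP, then
`Q τ 1 − Q τ 0 = λ + r_s (V 0 − V (τ+1))` for all `τ`, and if `V` is nondecreasing then
`Q` is submodular: `Q τ 1 − Q τ 0 ≤ Q τ' 1 − Q τ' 0` whenever `τ ≥ τ'`. -/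
theorem Q_factor_submodular
    (rs lam J : ℝ) (hrs0 : 0 < rs) (hrs1 : rs ≤ 1) (hlam : 0 ≤ lam)
    (g : ℕ → ℝ) (hg : Monotone g)
    (Q : ℕ → Fin 2 → ℝ) (V : ℕ → ℝ)
    (hV : ∀ τ : ℕ, V τ = min (Q τ 0) (Q τ 1))
    (hQ0 : ∀ τ : ℕ, Q τ 0 = g τ + V (τ + 1) - J)
    (hQ1 : ∀ τ : ℕ, Q τ 1 = g τ + lam + rs * V 0 + (1 - rs) * V (τ + 1) - J) :
    (∀ τ : ℕ, Q τ 1 - Q τ 0 = lam + rs * (V 0 - V (τ + 1))) ∧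
      (Monotone V →
        ∀ τ τ' : ℕ, τ' ≤ τ → Q τ 1 - Q τ 0 ≤ Q τ' 1 - Q τ' 0) :=
  Q_factor_submodular_general rs lam J hrs0 g Q V hQ0 hQ1
end

section
/- Suppose Q : ℕ × {0,1} → ℝ and J ∈ ℝ solve the average-cost Bellman optimality equation of the scheduling MDP, i.e., writing V(τ) := min(Q(τ,0), Q(τ,1)), for all τ ∈ ℕ: Q(τ,0) = g(τ) + V(τ+1) − J and Q(τ,1) = g(τ) + λ + r_s·V(0) + (1 − r_s)·V(τ+1) − J, and suppose V is nondecreasing. Then the set {τ ∈ ℕ : Q(τ,1) ≤ Q(τ,0)} is upward closed: if Q(τ,1) ≤ Q(τ,0) and τ' ≥ τ then Q(τ',1) ≤ Q(τ',0). Consequently, if this set is nonempty with least element θ⋆, the policy f⋆(τ) = 0 for τ < θ⋆ and f⋆(τ) = 1 for τ ≥ θ⋆ satisfies Q(τ, f⋆(τ)) = min(Q(τ,0), Q(τ,1)) for every τ, i.e., the optimal scheduling policy is of threshold type. (Theorem 1.) -/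
/-! The advantage of transmitting, `Q(τ,1) - Q(τ,0) = λ + r_s (V(0) - V(τ+1))`, is nonincreasing
in `τ` because `V` is nondecreasing; so once transmitting is optimal it stays optimal, and the
least such state is the threshold. -/

theorem Antitone.isUpperSet_setOf_le {α β : Type*} [Preorder α] [Preorder β] {f : α → β}
    (hf : Antitone f) (c : β) : IsUpperSet {x | f x ≤ c} :=
  fun _ _ hab ha => (hf hab).trans ha

theorem IsUpperSet.mem_iff_le_of_isLeast {α : Type*} [Preorder α] {s : Set α} {θ : α}
    (hs : IsUpperSet s) (hθ : IsLeast s θ) {x : α} : x ∈ s ↔ θ ≤ x :=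
  ⟨fun hx => hθ.2 hx, fun hx => hs hx hθ.1⟩

theorem apply_ite_eq_min_of_le_iff_not {β : Type*} [LinearOrder β] (q : Fin 2 → β) {p : Prop}
    [Decidable p] (h : q 1 ≤ q 0 ↔ ¬p) : q (if p then 0 else 1) = min (q 0) (q 1) := by
  split_ifs with hp
  · exact (min_eq_left (not_le.mp fun h10 => h.mp h10 hp).le).symm
  · exact (min_eq_right (h.mpr hp)).symm

theorem isUpperSet_setOf_transmit_le_idle {rs lam J : ℝ} (hrs : 0 ≤ rs) {g : ℕ → ℝ}
    {Q : ℕ → Fin 2 → ℝ} {V : ℕ → ℝ}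
    (hQ0 : ∀ τ : ℕ, Q τ 0 = g τ + V (τ + 1) - J)
    (hQ1 : ∀ τ : ℕ, Q τ 1 = g τ + lam + rs * V 0 + (1 - rs) * V (τ + 1) - J)
    (hVmono : Monotone V) :
    IsUpperSet {τ | Q τ 1 ≤ Q τ 0} := by
  have advantage_eq : ∀ τ, Q τ 1 - Q τ 0 = lam + rs * (V 0 - V (τ + 1)) := fun τ => by
    rw [hQ0, hQ1]; ring
  have advantage_antitone : Antitone fun τ => Q τ 1 - Q τ 0 := fun τ τ' hle => by
    simp only [advantage_eq]
    gcongr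
    exact hVmono (Nat.succ_le_succ hle)
  simpa only [sub_nonpos] using advantage_antitone.isUpperSet_setOf_le 0

theorem optimal_policy_threshold_general
    (rs lam J : ℝ) (hrs0 : 0 < rs)
    (g : ℕ → ℝ)
    (Q : ℕ → Fin 2 → ℝ) (V : ℕ → ℝ)
    (hQ0 : ∀ τ : ℕ, Q τ 0 = g τ + V (τ + 1) - J)
    (hQ1 : ∀ τ : ℕ, Q τ 1 = g τ + lam + rs * V 0 + (1 - rs) * V (τ + 1) - J)
    (hVmono : Monotone V) :
    (∀ τ τ' : ℕ, Q τ 1 ≤ Q τ 0 → τ ≤ τ' → Q τ' 1 ≤ Q τ' 0) ∧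
      (∀ θ : ℕ, IsLeast {τ : ℕ | Q τ 1 ≤ Q τ 0} θ →
        ∀ τ : ℕ, Q τ (if τ < θ then 0 else 1) = min (Q τ 0) (Q τ 1)) := by
  have hup := isUpperSet_setOf_transmit_le_idle hrs0.le hQ0 hQ1 hVmono
  refine ⟨fun τ τ' h hle => hup hle h, fun θ hθ τ => ?_⟩
  exact apply_ite_eq_min_of_le_iff_not (Q τ) ((hup.mem_iff_le_of_isLeast hθ).trans not_lt.symm)

/-- **Theorem 1: threshold structure of the optimal policy.** If `(Q, J)`
solves the average-cost Bellman optimality equation and `V` is nondecreasing, then the set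
`{τ | Q τ 1 ≤ Q τ 0}` is upward closed; consequently, if it has a least element `θ⋆`, the
threshold policy `f⋆(τ) = 0` for `τ < θ⋆` and `f⋆(τ) = 1` for `τ ≥ θ⋆` picks a minimizing
action at every state. -/
theorem optimal_policy_threshold
    (rs lam J : ℝ) (hrs0 : 0 < rs) (hrs1 : rs ≤ 1) (hlam : 0 ≤ lam)
    (g : ℕ → ℝ) (hg : Monotone g)
    (Q : ℕ → Fin 2 → ℝ) (V : ℕ → ℝ)
    (hV : ∀ τ : ℕ, V τ = min (Q τ 0) (Q τ 1))
    (hQ0 : ∀ τ : ℕ, Q τ 0 = g τ + V (τ + 1) - J)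
    (hQ1 : ∀ τ : ℕ, Q τ 1 = g τ + lam + rs * V 0 + (1 - rs) * V (τ + 1) - J)
    (hVmono : Monotone V) :
    (∀ τ τ' : ℕ, Q τ 1 ≤ Q τ 0 → τ ≤ τ' → Q τ' 1 ≤ Q τ' 0) ∧
      (∀ θ : ℕ, IsLeast {τ : ℕ | Q τ 1 ≤ Q τ 0} θ →
        ∀ τ : ℕ, Q τ (if τ < θ then 0 else 1) = min (Q τ 0) (Q τ 1)) :=
  optimal_policy_threshold_general rs lam J hrs0 g Q V hQ0 hQ1 hVmono
end

section
/- Fix γ ∈ (0,1), λ ≥ 0, r_s ∈ [0,1], and a bounded nondecreasing function g : ℕ → ℝ. Define T_γ on bounded functions V : ℕ → ℝ by (T_γ V)(τ) := min( g(τ) + γ·V(τ+1), g(τ) + λ + γ·(r_s·V(0) + (1 − r_s)·V(τ+1)) ). Then T_γ maps bounded functions to bounded functions, satisfies sup_τ |T_γV(τ) − T_γW(τ)| ≤ γ · sup_τ |V(τ) − W(τ)| for all bounded V, W (i.e., it is a γ-contraction in the sup norm), and its unique bounded fixed point V_γ is nondecreasing: V_γ(τ) ≥ V_γ(τ') whenever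 τ ≥ τ'. (Monotonicity of the discounted value function, Lemma 2 in discounted form.) -/
/-- The discounted Bellman operator of the scheduling MDP. -/
def bellmanOp (γ lam rs : ℝ) (g : ℕ → ℝ) (V : ℕ → ℝ) : ℕ → ℝ :=
  fun τ => min (g τ + γ * V (τ + 1))
    (g τ + lam + γ * (rs * V 0 + (1 - rs) * V (τ + 1)))

/-- A real-valued function on `ℕ` is bounded. -/
def IsBddFun (V : ℕ → ℝ) : Prop := ∃ C : ℝ, ∀ τ : ℕ, |V τ| ≤ C

/-! The operator is a `γ`-contraction of the bounded functions `ℕ →ᵇ ℝ`: each branch of the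
minimum is `γ` times an average of values of `V`. It maps nondecreasing functions to nondecreasing
ones, since `g` is nondecreasing and `V 0` enters every `bellmanOp V τ` with the same weight.
Nondecreasing functions form a closed set, so the limit of value iteration started at `0`, which is
the unique bounded fixed point, is nondecreasing. -/

open BoundedContinuousFunction Set

theorem ContractingWith.fixedPoint_mem_of_isClosed {α : Type*} [MetricSpace α] [Nonempty α]
    [CompleteSpace α] {K : NNReal} {f : α → α} (hf : ContractingWith K f) {s : Set α}
    (hs : IsClosed s) (hfs : MapsTo f s s) {x : α} (hx : x ∈ s) : fixedPoint f hf ∈ s :=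
  hs.mem_of_tendsto (hf.tendsto_iterate_fixedPoint x)
    (Filter.Eventually.of_forall fun n => hfs.iterate n hx)

theorem BoundedContinuousFunction.isClosed_setOf_monotone {α β : Type*} [TopologicalSpace α]
    [Preorder α] [PseudoMetricSpace β] [Preorder β] [OrderClosedTopology β] :
    IsClosed {V : α →ᵇ β | Monotone V} :=
  isClosed_monotone.preimage continuous_coe

namespace IsBddFun

noncomputable def toBCF {V : ℕ → ℝ} (hV : IsBddFun V) : ℕ →ᵇ ℝ :=
  ofNormedAddCommGroupDiscrete V hV.choose fun n => (Real.norm_eq_abs _).trans_le (hV.choose_spec n)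

@[simp]
theorem coe_toBCF {V : ℕ → ℝ} (hV : IsBddFun V) : ⇑hV.toBCF = V := rfl

end IsBddFun

theorem BoundedContinuousFunction.isBddFun (V : ℕ →ᵇ ℝ) : IsBddFun V :=
  ⟨‖V‖, V.norm_coe_le_norm⟩

section BellmanOp

variable {γ lam rs : ℝ} {g : ℕ → ℝ}

theorem bellmanOp_zero (hlam : 0 ≤ lam) : bellmanOp γ lam rs g 0 = g := by
  ext τ
  simp [bellmanOp, hlam]

theorem abs_bellmanOp_sub_le (hγ : 0 ≤ γ) (hrs0 : 0 ≤ rs) (hrs1 : rs ≤ 1) {V W : ℕ → ℝ} {D : ℝ}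
    (hD : ∀ n, |V n - W n| ≤ D) (τ : ℕ) :
    |bellmanOp γ lam rs g V τ - bellmanOp γ lam rs g W τ| ≤ γ * D := by
  have hstay : |(g τ + γ * V (τ + 1)) - (g τ + γ * W (τ + 1))| ≤ γ * D := by
    rw [add_sub_add_left_eq_sub, ← mul_sub, abs_mul, abs_of_nonneg hγ]
    exact mul_le_mul_of_nonneg_left (hD _) hγ
  have hmix : |rs * (V 0 - W 0) + (1 - rs) * (V (τ + 1) - W (τ + 1))| ≤ D :=
    calc _ ≤ rs * |V 0 - W 0| + (1 - rs) * |V (τ + 1) - W (τ + 1)| := by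
          refine (abs_add_le _ _).trans_eq ?_
          rw [abs_mul, abs_mul, abs_of_nonneg hrs0, abs_of_nonneg (sub_nonneg.2 hrs1)]
      _ ≤ rs * D + (1 - rs) * D := by gcongr <;> exact hD _
      _ = D := by ring
  have hserve : |(g τ + lam + γ * (rs * V 0 + (1 - rs) * V (τ + 1)))
      - (g τ + lam + γ * (rs * W 0 + (1 - rs) * W (τ + 1)))| ≤ γ * D := by
    rw [add_sub_add_left_eq_sub, ← mul_sub, abs_mul, abs_of_nonneg hγ]
    refine mul_le_mul_of_nonneg_left (le_of_eq_of_le ?_ hmix) hγ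
    congr 1
    ring
  exact (abs_min_sub_min_le_max _ _ _ _).trans (max_le hstay hserve)

theorem isBddFun_bellmanOp (hγ : 0 ≤ γ) (hlam : 0 ≤ lam) (hrs0 : 0 ≤ rs) (hrs1 : rs ≤ 1)
    (hg : IsBddFun g) {V : ℕ → ℝ} (hV : IsBddFun V) : IsBddFun (bellmanOp γ lam rs g V) := by
  obtain ⟨Cg, hCg⟩ := hg
  obtain ⟨CV, hCV⟩ := hV
  refine ⟨Cg + γ * CV, fun τ => ?_⟩
  have hdev : |bellmanOp γ lam rs g V τ - g τ| ≤ γ * CV := by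
    have := abs_bellmanOp_sub_le (lam := lam) (g := g) (W := 0) hγ hrs0 hrs1
      (by simpa using hCV) τ
    rwa [bellmanOp_zero hlam] at this
  linarith [abs_sub_abs_le_abs_sub (bellmanOp γ lam rs g V τ) (g τ), hCg τ]

theorem bellmanOp_monotone (hγ : 0 ≤ γ) (hrs1 : rs ≤ 1) (hg : Monotone g) {V : ℕ → ℝ}
    (hV : Monotone V) : Monotone (bellmanOp γ lam rs g V) := by
  intro a b hab
  have hsucc : V (a + 1) ≤ V (b + 1) := hV (by omega)
  have hstay_weight : 0 ≤ 1 - rs := sub_nonneg.2 hrs1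
  unfold bellmanOp
  gcongr <;> exact hg hab

noncomputable def bellmanBCF (hγ : 0 ≤ γ) (hlam : 0 ≤ lam) (hrs0 : 0 ≤ rs) (hrs1 : rs ≤ 1)
    (hg : IsBddFun g) (V : ℕ →ᵇ ℝ) : ℕ →ᵇ ℝ :=
  (isBddFun_bellmanOp hγ hlam hrs0 hrs1 hg V.isBddFun).toBCF

@[simp]
theorem coe_bellmanBCF (hγ : 0 ≤ γ) (hlam : 0 ≤ lam) (hrs0 : 0 ≤ rs) (hrs1 : rs ≤ 1)
    (hg : IsBddFun g) (V : ℕ →ᵇ ℝ) :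
    ⇑(bellmanBCF hγ hlam hrs0 hrs1 hg V) = bellmanOp γ lam rs g V := rfl

theorem lipschitzWith_bellmanBCF (hγ : 0 ≤ γ) (hlam : 0 ≤ lam) (hrs0 : 0 ≤ rs) (hrs1 : rs ≤ 1)
    (hg : IsBddFun g) : LipschitzWith ⟨γ, hγ⟩ (bellmanBCF hγ hlam hrs0 hrs1 hg) := by
  refine LipschitzWith.of_dist_le_mul fun V W => (dist_le (by positivity)).2 fun τ => ?_
  show dist _ _ ≤ γ * dist V W
  simpa only [coe_bellmanBCF, Real.dist_eq] using abs_bellmanOp_sub_le hγ hrs0 hrs1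
    (fun n => (Real.dist_eq (V n) (W n)).symm.trans_le (dist_coe_le_dist n)) τ

theorem contractingWith_bellmanBCF (hγ0 : 0 ≤ γ) (hγ1 : γ < 1) (hlam : 0 ≤ lam) (hrs0 : 0 ≤ rs)
    (hrs1 : rs ≤ 1) (hg : IsBddFun g) :
    ContractingWith ⟨γ, hγ0⟩ (bellmanBCF hγ0 hlam hrs0 hrs1 hg) :=
  ⟨hγ1, lipschitzWith_bellmanBCF hγ0 hlam hrs0 hrs1 hg⟩

theorem iSup_abs_bellmanOp_sub_le (hγ : 0 ≤ γ) (hlam : 0 ≤ lam) (hrs0 : 0 ≤ rs) (hrs1 : rs ≤ 1)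
    (hg : IsBddFun g) {V W : ℕ → ℝ} (hV : IsBddFun V) (hW : IsBddFun W) :
    ⨆ τ, |bellmanOp γ lam rs g V τ - bellmanOp γ lam rs g W τ| ≤ γ * ⨆ τ, |V τ - W τ| := by
  have h : dist _ _ ≤ γ * dist _ _ :=
    (lipschitzWith_bellmanBCF hγ hlam hrs0 hrs1 hg).dist_le_mul hV.toBCF hW.toBCF
  simpa only [dist_eq_iSup, Real.dist_eq, coe_bellmanBCF, IsBddFun.coe_toBCF] using h

end BellmanOp

/-- **Lemma 2 in discounted form.** For `γ ∈ (0,1)`, `λ ≥ 0`, `r_s ∈ [0,1]`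
and bounded nondecreasing `g`, the operator `T_γ` maps bounded functions to bounded
functions, is a `γ`-contraction in the sup norm, and its unique bounded fixed point is
nondecreasing. -/
theorem discounted_value_function_monotone
    (γ lam rs : ℝ) (hγ0 : 0 < γ) (hγ1 : γ < 1) (hlam : 0 ≤ lam)
    (hrs0 : 0 ≤ rs) (hrs1 : rs ≤ 1)
    (g : ℕ → ℝ) (hg : Monotone g) (hgbdd : IsBddFun g) :
    (∀ V : ℕ → ℝ, IsBddFun V → IsBddFun (bellmanOp γ lam rs g V)) ∧
      (∀ V W : ℕ → ℝ, IsBddFun V → IsBddFun W →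
        (⨆ τ : ℕ, |bellmanOp γ lam rs g V τ - bellmanOp γ lam rs g W τ|)
          ≤ γ * ⨆ τ : ℕ, |V τ - W τ|) ∧
      (∃! V : ℕ → ℝ, IsBddFun V ∧ bellmanOp γ lam rs g V = V) ∧
      (∀ V : ℕ → ℝ, IsBddFun V → bellmanOp γ lam rs g V = V → Monotone V) := by
  have hT := contractingWith_bellmanBCF hγ0.le hγ1 hlam hrs0 hrs1 hgbdd
  set V₀ := ContractingWith.fixedPoint _ hT
  have hV₀fix : bellmanOp γ lam rs g V₀ = V₀ := congrArg DFunLike.coe hT.fixedPoint_isFixedPt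
  have hV₀mono : Monotone V₀ :=
    hT.fixedPoint_mem_of_isClosed isClosed_setOf_monotone
      (fun V hV => bellmanOp_monotone hγ0.le hrs1 hg hV) (x := 0) monotone_const
  have huniq (W : ℕ → ℝ) (hW : IsBddFun W) (hWfix : bellmanOp γ lam rs g W = W) : W = V₀ :=
    congrArg DFunLike.coe (hT.fixedPoint_unique (x := hW.toBCF) (DFunLike.coe_injective hWfix))
  refine ⟨fun V hV => isBddFun_bellmanOp hγ0.le hlam hrs0 hrs1 hgbdd hV,
    fun V W hV hW => iSup_abs_bellmanOp_sub_le hγ0.le hlam hrs0 hrs1 hgbdd hV hW,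
    ⟨V₀, ⟨V₀.isBddFun, hV₀fix⟩, fun W hW => huniq W hW.1 hW.2⟩,
    fun V hV hVfix => huniq V hV hVfix ▸ hV₀mono⟩
end

section
/- Fix r_s ∈ (0,1), θ ∈ ℕ, and r_θ ∈ [0,1]. Define p := r_s / (r_s·(θ + 1 − r_θ) + 1) and π : ℕ → ℝ by π(i) = p for 0 ≤ i ≤ θ, π(θ+1) = (1 − r_s·r_θ)·p, and π(θ+1+j) = (1 − r_s)^j · (1 − r_s·r_θ)·p for all j ≥ 0. Then π is a probability distribution on ℕ (π ≥ 0 and Σ_{i=0}^∞ π(i) = 1), and π is stationary for the Markov chain induced by the randomized threshold policy: π(i+1) = π(i) for 0 ≤ i < θ, π(θ+1) = (1 − r_s·r_θ)·π(θ), π(τ+1) = (1 − r_s)·π(τ) for τ > θ, and π(0) = r_s·r_θ·π(θ) + r_s·Σ_{τ > θ} π(τ). -/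
/-!
The chain moves deterministically up to `θ`, so `π` is constant there; above `θ` it survives each
step with probability `1 - r_s`, so `π` decays geometrically with ratio `1 - r_s`, and the tail has
mass `(1 - r_s r_θ) p / r_s`. The normalizing constant `p` is chosen so that the `θ + 1` equal
values and this tail add up to `1`. At `0` the inflow `r_s r_θ p` from `θ` plus `r_s` times the
tail mass is exactly `p`.
-/

section ConstThenGeometric

variable {f : ℕ → ℝ} {n : ℕ} {a r c : ℝ}

theorem apply_succ_of_geometric_tail (hf : ∀ j, f (n + 1 + j) = r ^ j * c) {τ : ℕ} (hτ : n < τ) :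
    f (τ + 1) = r * f τ := by
  obtain ⟨j, rfl⟩ := Nat.exists_eq_add_of_lt hτ
  rw [show n + j + 1 + 1 = n + 1 + (j + 1) by omega, show n + j + 1 = n + 1 + j by omega, hf, hf,
    pow_succ]
  ring

theorem hasSum_geometric_tail (hf : ∀ j, f (n + 1 + j) = r ^ j * c) (hr0 : 0 ≤ r) (hr1 : r < 1) :
    HasSum (fun j => f (n + 1 + j)) ((1 - r)⁻¹ * c) := by
  simpa only [hf] using (hasSum_geometric_of_lt_one hr0 hr1).mul_right c

theorem hasSum_of_const_of_geometric_tail (hlow : ∀ i ≤ n, f i = a)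
    (hf : ∀ j, f (n + 1 + j) = r ^ j * c) (hr0 : 0 ≤ r) (hr1 : r < 1) :
    HasSum f ((1 - r)⁻¹ * c + (n + 1) * a) := by
  have hhead : ∑ i ∈ Finset.range (n + 1), f i = (n + 1) * a := by
    rw [Finset.sum_congr rfl fun i hi => hlow i (Finset.mem_range_succ_iff.mp hi)]
    simp
  rw [← hhead, ← hasSum_nat_add_iff]
  simpa only [add_comm] using hasSum_geometric_tail hf hr0 hr1

theorem nonneg_of_const_of_geometric_tail (hlow : ∀ i ≤ n, f i = a)
    (hf : ∀ j, f (n + 1 + j) = r ^ j * c) (ha : 0 ≤ a) (hr : 0 ≤ r) (hc : 0 ≤ c) (i : ℕ) :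
    0 ≤ f i := by
  rcases le_or_gt i n with hi | hi
  · exact hlow i hi ▸ ha
  · obtain ⟨j, rfl⟩ := Nat.exists_eq_add_of_lt hi
    rw [add_right_comm, hf]
    positivity

end ConstThenGeometric

theorem randomized_threshold_stationary_distribution_general
    (rs rθ : ℝ) (θ : ℕ) (hrs0 : 0 < rs) (hrs1 : rs < 1)
    (hrθ1 : rθ ≤ 1)
    (p : ℝ) (hp : p = rs / (rs * ((θ : ℝ) + 1 - rθ) + 1))
    (π : ℕ → ℝ)
    (hπlow : ∀ i : ℕ, i ≤ θ → π i = p)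
    (hπhigh : ∀ j : ℕ, π (θ + 1 + j) = (1 - rs) ^ j * ((1 - rs * rθ) * p)) :
    (∀ i : ℕ, 0 ≤ π i) ∧
      HasSum π 1 ∧
      (∀ i : ℕ, i < θ → π (i + 1) = π i) ∧
      π (θ + 1) = (1 - rs * rθ) * π θ ∧
      (∀ τ : ℕ, θ < τ → π (τ + 1) = (1 - rs) * π τ) ∧
      π 0 = rs * rθ * π θ + rs * ∑' j : ℕ, π (θ + 1 + j) := by
  have hden : 0 < rs * ((θ : ℝ) + 1 - rθ) + 1 := by
    have : 0 ≤ (θ : ℝ) + 1 - rθ := by linarith [θ.cast_nonneg (α := ℝ)]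
    positivity
  have hp0 : 0 ≤ p := hp ▸ by positivity
  have hstay : 0 ≤ 1 - rs * rθ := by nlinarith
  have hr0 : 0 ≤ 1 - rs := by linarith
  have hr1 : 1 - rs < 1 := by linarith
  have hmass : (1 - (1 - rs))⁻¹ * ((1 - rs * rθ) * p) + (θ + 1) * p = 1 := by
    rw [hp, sub_sub_cancel]
    field_simp
    ring
  refine ⟨nonneg_of_const_of_geometric_tail hπlow hπhigh hp0 hr0 (by positivity),
    hmass ▸ hasSum_of_const_of_geometric_tail hπlow hπhigh hr0 hr1,
    fun i hi => by rw [hπlow i hi.le, hπlow (i + 1) hi], ?_,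
    fun τ => apply_succ_of_geometric_tail hπhigh, ?_⟩
  · simpa [hπlow θ le_rfl] using hπhigh 0
  · rw [(hasSum_geometric_tail hπhigh hr0 hr1).tsum_eq, hπlow 0 θ.zero_le, hπlow θ le_rfl,
      sub_sub_cancel]
    field_simp
    ring

/-- The explicit distribution `π` (constant `p` on `{0,…,θ}`, then
geometrically decaying) is a probability distribution on `ℕ` and is stationary for the
Markov chain induced by the Bernoulli randomized threshold policy `(θ, r_θ)` over a channel
with success probability `r_s`. -/
theorem randomized_threshold_stationary_distribution
    (rs rθ : ℝ) (θ : ℕ) (hrs0 : 0 < rs) (hrs1 : rs < 1)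
    (hrθ0 : 0 ≤ rθ) (hrθ1 : rθ ≤ 1)
    (p : ℝ) (hp : p = rs / (rs * ((θ : ℝ) + 1 - rθ) + 1))
    (π : ℕ → ℝ)
    (hπlow : ∀ i : ℕ, i ≤ θ → π i = p)
    (hπhigh : ∀ j : ℕ, π (θ + 1 + j) = (1 - rs) ^ j * ((1 - rs * rθ) * p)) :
    (∀ i : ℕ, 0 ≤ π i) ∧
      HasSum π 1 ∧
      (∀ i : ℕ, i < θ → π (i + 1) = π i) ∧
      π (θ + 1) = (1 - rs * rθ) * π θ ∧
      (∀ τ : ℕ, θ < τ → π (τ + 1) = (1 - rs) * π τ) ∧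
      π 0 = rs * rθ * π θ + rs * ∑' j : ℕ, π (θ + 1 + j) :=
  randomized_threshold_stationary_distribution_general rs rθ θ hrs0 hrs1 hrθ1 p hp π hπlow hπhigh
end

section
/- Fix r_s ∈ (0,1), θ ∈ ℕ, and r_θ ∈ [0,1], and let π be the stationary distribution of the randomized threshold chain: with p := r_s / (r_s·(θ + 1 − r_θ) + 1), π(i) = p for 0 ≤ i ≤ θ and π(θ+1+j) = (1 − r_s)^j · (1 − r_s·r_θ)·p for j ≥ 0. Then the stationary transmission rate satisfies π(θ)·r_θ + Σ_{τ > θ} π(τ) = 1 / (r_s·(θ + 1 − r_θ) + 1). In particular, for the deterministic threshold policy (r_θ = 1) the stationary transmission rate, which equals the stationary probability Pr(τ ≥ θ) = Σ_{i ≥ θ} π(i), is 1 / (r_s·θ + 1). -/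
/-!
Above the threshold the stationary distribution is geometric with ratio `1 - r_s`, so its tail
mass is `(1 - r_s r_θ) p / r_s`. Adding the mass `p r_θ` transmitted at `θ` gives exactly `p / r_s`,
the reciprocal of the normalising denominator. For `r_θ = 1`, `Pr(τ ≥ θ)` is that same sum.
-/

lemma hasSum_of_eq_pow_mul {f : ℕ → ℝ} {q c : ℝ} (hq0 : 0 ≤ q) (hq1 : q < 1)
    (hf : ∀ j, f j = q ^ j * c) : HasSum f (c / (1 - q)) := by
  rw [funext hf, div_eq_inv_mul]
  exact (hasSum_geometric_of_lt_one hq0 hq1).mul_right c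

theorem randomized_threshold_transmission_rate_general
    (rs rθ : ℝ) (θ : ℕ) (hrs0 : 0 < rs) (hrs1 : rs < 1)
    (p : ℝ) (hp : p = rs / (rs * ((θ : ℝ) + 1 - rθ) + 1))
    (π : ℕ → ℝ)
    (hπlow : ∀ i : ℕ, i ≤ θ → π i = p)
    (hπhigh : ∀ j : ℕ, π (θ + 1 + j) = (1 - rs) ^ j * ((1 - rs * rθ) * p)) :
    π θ * rθ + (∑' j : ℕ, π (θ + 1 + j)) = 1 / (rs * ((θ : ℝ) + 1 - rθ) + 1) ∧
      (rθ = 1 → (∑' i : ℕ, π (θ + i)) = 1 / (rs * (θ : ℝ) + 1)) := by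
  have hπθ : π θ = p := hπlow θ le_rfl
  have htail : HasSum (fun j ↦ π (θ + 1 + j)) ((1 - rs * rθ) * p / rs) := by
    simpa using hasSum_of_eq_pow_mul (by linarith) (by linarith) hπhigh
  have hrate : π θ * rθ + (∑' j : ℕ, π (θ + 1 + j)) = 1 / (rs * ((θ : ℝ) + 1 - rθ) + 1) := by
    calc π θ * rθ + (∑' j : ℕ, π (θ + 1 + j)) = p / rs := by
          rw [hπθ, htail.tsum_eq]
          field_simp
          ring
      _ = 1 / (rs * ((θ : ℝ) + 1 - rθ) + 1) := by rw [hp, div_div_cancel_left' hrs0.ne', one_div]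
  refine ⟨hrate, fun hrθ ↦ ?_⟩
  have hsplit : HasSum (fun i ↦ π (θ + i)) (π θ + ∑' j : ℕ, π (θ + 1 + j)) :=
    HasSum.zero_add (f := fun i ↦ π (θ + i)) (by convert htail.summable.hasSum using 3; omega)
  subst hrθ
  simpa [hsplit.tsum_eq] using hrate

/-- Under the stationary distribution of the randomized threshold chain,
the stationary transmission rate is `π θ · r_θ + ∑_{τ>θ} π τ = 1 / (r_s (θ + 1 − r_θ) + 1)`;
in particular, for the deterministic threshold policy (`r_θ = 1`) the stationary transmission
rate `Pr(τ ≥ θ) = ∑_{i ≥ θ} π i` equals `1 / (r_s θ + 1)`. -/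
theorem randomized_threshold_transmission_rate
    (rs rθ : ℝ) (θ : ℕ) (hrs0 : 0 < rs) (hrs1 : rs < 1)
    (hrθ0 : 0 ≤ rθ) (hrθ1 : rθ ≤ 1)
    (p : ℝ) (hp : p = rs / (rs * ((θ : ℝ) + 1 - rθ) + 1))
    (π : ℕ → ℝ)
    (hπlow : ∀ i : ℕ, i ≤ θ → π i = p)
    (hπhigh : ∀ j : ℕ, π (θ + 1 + j) = (1 - rs) ^ j * ((1 - rs * rθ) * p)) :
    π θ * rθ + (∑' j : ℕ, π (θ + 1 + j)) = 1 / (rs * ((θ : ℝ) + 1 - rθ) + 1) ∧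
      (rθ = 1 → (∑' i : ℕ, π (θ + i)) = 1 / (rs * (θ : ℝ) + 1)) :=
  randomized_threshold_transmission_rate_general rs rθ θ hrs0 hrs1 p hp π hπlow hπhigh
end

section
/- Fix r_s ∈ (0,1] and a communication budget b ∈ (0,1]. Define θ⋆ := ⌊(1 − b)/(r_s·b)⌋ (which equals ⌊1/(r_s·b) − 1/r_s⌋) and r⋆ := θ⋆ + 1 + (b − 1)/(b·r_s). Then 0 < r⋆ ≤ 1, and the randomized Bernoulli threshold policy (θ⋆, r⋆) meets the budget exactly: 1 / (r_s·(θ⋆ + 1 − r⋆) + 1) = b, i.e., its stationary transmission rate equals b. (Corollary 1.) -/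
/-!
The rate `1 / (r_s (θ + 1 − r) + 1)` depends on `(θ, r)` only through `x = θ + 1 − r`,
and equals `b` exactly when `x = (1 − b) / (r_s b)`. Taking `θ⋆ = ⌊x⌋` forces
`r⋆ = ⌊x⌋ + 1 − x`, which lies in `(0, 1]` because `x ≥ 0`.
-/

lemma Nat.floor_add_one_sub_mem_Ioc {α : Type*} [Ring α] [LinearOrder α] [IsStrictOrderedRing α]
    [FloorSemiring α] {x : α} (hx : 0 ≤ x) : (⌊x⌋₊ : α) + 1 - x ∈ Set.Ioc 0 1 :=
  ⟨sub_pos.2 (Nat.lt_floor_add_one x),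
    sub_le_iff_le_add'.2 (add_le_add_left (Nat.floor_le hx) 1)⟩

lemma one_div_mul_sub_one_div_eq {rs b : ℝ} (hrs : rs ≠ 0) (hb : b ≠ 0) :
    1 / (rs * b) - 1 / rs = (1 - b) / (rs * b) := by
  field_simp

lemma one_div_mul_one_sub_div_add_one {rs b : ℝ} (hrs : rs ≠ 0) (hb : b ≠ 0) :
    1 / (rs * ((1 - b) / (rs * b)) + 1) = b := by
  rw [mul_div_assoc', mul_div_mul_left _ _ hrs, div_add_one hb, sub_add_cancel, one_div_one_div]

theorem optimal_randomized_threshold_meets_budget_general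
    (rs b : ℝ) (hrs0 : 0 < rs) (hb0 : 0 < b) (hb1 : b ≤ 1) :
    ⌊(1 - b) / (rs * b)⌋₊ = ⌊1 / (rs * b) - 1 / rs⌋₊ ∧
      0 < (⌊(1 - b) / (rs * b)⌋₊ : ℝ) + 1 + (b - 1) / (b * rs) ∧
      (⌊(1 - b) / (rs * b)⌋₊ : ℝ) + 1 + (b - 1) / (b * rs) ≤ 1 ∧
      1 / (rs * ((⌊(1 - b) / (rs * b)⌋₊ : ℝ) + 1
          - ((⌊(1 - b) / (rs * b)⌋₊ : ℝ) + 1 + (b - 1) / (b * rs))) + 1) = b := by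
  set x := (1 - b) / (rs * b) with hx
  have hx0 : 0 ≤ x := div_nonneg (sub_nonneg.2 hb1) (by positivity)
  have hr : (b - 1) / (b * rs) = -x := by rw [hx, mul_comm b rs, ← neg_div, neg_sub]
  obtain ⟨hr_pos, hr_le⟩ := Nat.floor_add_one_sub_mem_Ioc hx0
  rw [hr, ← sub_eq_add_neg]
  refine ⟨by rw [one_div_mul_sub_one_div_eq hrs0.ne' hb0.ne'], hr_pos, hr_le, ?_⟩
  rw [sub_sub_cancel]
  exact one_div_mul_one_sub_div_add_one hrs0.ne' hb0.ne'

/-- **Corollary 1.** For `r_s ∈ (0,1]` and a budget `b ∈ (0,1]`, the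
threshold `θ⋆ = ⌊(1−b)/(r_s b)⌋ = ⌊1/(r_s b) − 1/r_s⌋` and randomization parameter
`r⋆ = θ⋆ + 1 + (b−1)/(b r_s)` satisfy `0 < r⋆ ≤ 1`, and the corresponding randomized
threshold policy meets the communication budget exactly:
`1 / (r_s (θ⋆ + 1 − r⋆) + 1) = b`. -/
theorem optimal_randomized_threshold_meets_budget
    (rs b : ℝ) (hrs0 : 0 < rs) (hrs1 : rs ≤ 1) (hb0 : 0 < b) (hb1 : b ≤ 1) :
    ⌊(1 - b) / (rs * b)⌋₊ = ⌊1 / (rs * b) - 1 / rs⌋₊ ∧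
      0 < (⌊(1 - b) / (rs * b)⌋₊ : ℝ) + 1 + (b - 1) / (b * rs) ∧
      (⌊(1 - b) / (rs * b)⌋₊ : ℝ) + 1 + (b - 1) / (b * rs) ≤ 1 ∧
      1 / (rs * ((⌊(1 - b) / (rs * b)⌋₊ : ℝ) + 1
          - ((⌊(1 - b) / (rs * b)⌋₊ : ℝ) + 1 + (b - 1) / (b * rs))) + 1) = b :=
  optimal_randomized_threshold_meets_budget_general rs b hrs0 hb0 hb1
end
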